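/- Let p : Q̄_T → ℝ be bounded and measurable, and let u ∈ Z^1 satisfy u(x,0) ≥ 0 for all x ∈ Ω̄ and ∂_t u(x,t) ≥ ∫_Ω J(x,y) u(y,t) dy + p(x,t) u(x,t) for all x ∈ Ω̄ and t ∈ (0,T]. If u(x₀,0) > 0 for some x₀ ∈ Ω̄, then u(x₀,t) > 0 for all t ∈ [0,T]. -/

import Mathlib

open MeasureTheory Set Function

/-! A nonlocal Grönwall argument. The weight `exp (M t)`, with `M ≥ |p|`, turns the supersolution
inequality into `(exp (M t) u)' ≥ exp (M t) (∫ J u + (p + M) u)` with `p + M ≥ 0`.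
Since `∫_Ω J ≤ 1`, a lower bound `u ≥ -β` at time `s` propagates to `∂ₜu + M u ≥ -(1 + 2M) β`, so
iterating from the bound `u ≥ -B` gives `u ≥ -B ((1 + 2M) t)ᵏ / k!` for every `k`, hence `u ≥ 0`.
Then `∂ₜu + M u ≥ 0` along `x₀`, so `u(x₀, t) ≥ exp (-M t) u(x₀, 0) > 0`. -/

theorem monotoneOn_exp_mul_mul_of_deriv_add_mul_nonneg {D : Set ℝ} (hD : Convex ℝ D)
    {f f' : ℝ → ℝ} {M : ℝ} (hf : ContinuousOn f D)
    (hf' : ∀ s ∈ interior D, HasDerivAt f (f' s) s)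
    (hf'₀ : ∀ s ∈ interior D, 0 ≤ f' s + M * f s) :
    MonotoneOn (fun s => Real.exp (M * s) * f s) D := by
  refine monotoneOn_of_hasDerivWithinAt_nonneg hD
    ((Real.continuous_exp.comp (continuous_const_mul M)).continuousOn.mul hf)
    (fun s hs => ((((hasDerivAt_id s).const_mul M).exp).mul (hf' s hs)).hasDerivWithinAt)
    (fun s hs => ?_)
  have hrw : Real.exp (M * id s) * (M * 1) * f s + Real.exp (M * id s) * f' s
      = Real.exp (M * s) * (f' s + M * f s) := by simp only [id]; ring
  rw [hrw]
  exact mul_nonneg (Real.exp_pos _).le (hf'₀ s hs)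

theorem le_exp_mul_mul_of_deriv_add_mul_nonneg {f f' : ℝ → ℝ} {M T t : ℝ}
    (hf : ContinuousOn f (Icc 0 T)) (hf' : ∀ s ∈ Ioo 0 T, HasDerivAt f (f' s) s)
    (hf'₀ : ∀ s ∈ Ioo 0 T, 0 ≤ f' s + M * f s) (ht : t ∈ Icc 0 T) :
    f 0 ≤ Real.exp (M * t) * f t := by
  rw [interior_Icc.symm] at hf' hf'₀
  simpa using monotoneOn_exp_mul_mul_of_deriv_add_mul_nonneg (convex_Icc 0 T) hf hf' hf'₀
    (left_mem_Icc.2 (ht.1.trans ht.2)) ht ht.1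

noncomputable def expTerm (B C : ℝ) (k : ℕ) (s : ℝ) : ℝ := B * (C * s) ^ k / k.factorial

theorem expTerm_nonneg {B C s : ℝ} (hB : 0 ≤ B) (hC : 0 ≤ C) (hs : 0 ≤ s) (k : ℕ) :
    0 ≤ expTerm B C k s := by
  unfold expTerm; positivity

theorem hasDerivAt_expTerm_succ (B C : ℝ) (k : ℕ) (s : ℝ) :
    HasDerivAt (expTerm B C (k + 1)) (C * expTerm B C k s) s := by
  refine (((((hasDerivAt_id s).const_mul C).pow (k + 1)).const_mul B).div_const
    ((k + 1).factorial : ℝ)).congr_deriv ?_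
  simp only [expTerm, id, Nat.factorial_succ, Nat.cast_mul, Nat.cast_succ, Nat.add_sub_cancel]
  field_simp

theorem tendsto_expTerm (B C s : ℝ) :
    Filter.Tendsto (fun k => expTerm B C k s) Filter.atTop (nhds 0) := by
  simpa [expTerm] using FloorSemiring.tendsto_mul_pow_div_factorial_sub_atTop B (C * s) 0

theorem neg_le_setIntegral_mul_of_neg_le {α : Type*} [MeasurableSpace α] {μ : Measure α}
    {s : Set α} (hs : MeasurableSet s) {k v : α → ℝ} {b : ℝ} (hb : 0 ≤ b)
    (hk : IntegrableOn k s μ) (hkv : IntegrableOn (fun y => k y * v y) s μ)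
    (hk₀ : ∀ y ∈ s, 0 ≤ k y) (hk₁ : ∫ y in s, k y ∂μ ≤ 1) (hv : ∀ y ∈ s, -b ≤ v y) :
    -b ≤ ∫ y in s, k y * v y ∂μ :=
  calc -b ≤ (∫ y in s, k y ∂μ) * -b := by nlinarith
    _ = ∫ y in s, k y * -b ∂μ := (integral_mul_const _ _).symm
    _ ≤ ∫ y in s, k y * v y ∂μ :=
      setIntegral_mono_on (hk.mul_const _) hkv hs
        fun y hy => mul_le_mul_of_nonneg_left (hv y hy) (hk₀ y hy)

/-- `L x s` stands for the nonlocal term `∫_Ω J(x,y) u(y,s) dy`; `neg_le_nonlocal` is the only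
property of it that the comparison argument uses. -/
structure IsNonlocalSupersolution {α : Type*} (S : Set α) (T M : ℝ) (L p u ut : α → ℝ → ℝ) :
    Prop where
  neg_le_nonlocal : ∀ s ∈ Ioo 0 T, ∀ b, 0 ≤ b → (∀ y ∈ S, -b ≤ u y s) → ∀ x ∈ S, -b ≤ L x s
  abs_coeff_le : ∀ x ∈ S, ∀ s ∈ Ioo 0 T, |p x s| ≤ M
  bddBelow : ∃ B, ∀ x ∈ S, ∀ s ∈ Icc 0 T, -B ≤ u x s
  continuousOn : ∀ x ∈ S, ContinuousOn (u x) (Icc 0 T)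
  hasDerivAt : ∀ x ∈ S, ∀ s ∈ Ioo 0 T, HasDerivAt (u x) (ut x s) s
  nonneg_zero : ∀ x ∈ S, 0 ≤ u x 0
  le_deriv : ∀ x ∈ S, ∀ s ∈ Ioo 0 T, L x s + p x s * u x s ≤ ut x s

namespace IsNonlocalSupersolution

variable {α : Type*} {S : Set α} {T M : ℝ} {L p u ut : α → ℝ → ℝ}

theorem neg_expTerm_succ_le (h : IsNonlocalSupersolution S T M L p u ut) {B : ℝ} (hB : 0 ≤ B)
    {k : ℕ} (hk : ∀ y ∈ S, ∀ s ∈ Icc 0 T, -expTerm B (1 + 2 * M) k s ≤ u y s) :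
    ∀ x ∈ S, ∀ t ∈ Icc 0 T, -expTerm B (1 + 2 * M) (k + 1) t ≤ u x t := by
  intro x hx t ht
  have hmono := le_exp_mul_mul_of_deriv_add_mul_nonneg (M := M)
    (f := fun s => u x s + expTerm B (1 + 2 * M) (k + 1) s)
    (f' := fun s => ut x s + (1 + 2 * M) * expTerm B (1 + 2 * M) k s)
    ((h.continuousOn x hx).add fun s _ =>
      (hasDerivAt_expTerm_succ _ _ _ s).continuousAt.continuousWithinAt)
    (fun s hs => (h.hasDerivAt x hx s hs).add (hasDerivAt_expTerm_succ _ _ _ s)) ?_ ht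
  · have hβ0 : expTerm B (1 + 2 * M) (k + 1) 0 = 0 := by simp [expTerm]
    simp only [hβ0, add_zero] at hmono
    linarith [nonneg_of_mul_nonneg_right ((h.nonneg_zero x hx).trans hmono) (Real.exp_pos (M * t))]
  intro s hs
  have hsI : s ∈ Icc 0 T := Ioo_subset_Icc_self hs
  have hM : 0 ≤ M := (abs_nonneg _).trans (h.abs_coeff_le x hx s hs)
  have hC : 0 ≤ 1 + 2 * M := by linarith
  have hβ := expTerm_nonneg hB hC hsI.1 k
  have hβ' := expTerm_nonneg hB hC hsI.1 (k + 1)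
  have hLs := h.neg_le_nonlocal s hs _ hβ (fun y hy => hk y hy s hsI) x hx
  have hus := hk x hx s hsI
  obtain ⟨hpl, hpu⟩ := abs_le.1 (h.abs_coeff_le x hx s hs)
  have := h.le_deriv x hx s hs
  nlinarith [mul_nonneg (neg_le_iff_add_nonneg.1 hpl) (neg_le_iff_add_nonneg'.1 hus),
    mul_nonneg (sub_nonneg.2 hpu) hβ, mul_nonneg hM hβ']

theorem nonneg (h : IsNonlocalSupersolution S T M L p u ut) :
    ∀ x ∈ S, ∀ t ∈ Icc 0 T, 0 ≤ u x t := by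
  obtain ⟨B, hB⟩ := h.bddBelow
  have hbound : ∀ k : ℕ, ∀ x ∈ S, ∀ t ∈ Icc 0 T, -expTerm |B| (1 + 2 * M) k t ≤ u x t := by
    intro k
    induction k with
    | zero =>
      intro x hx t ht
      simpa [expTerm] using (neg_le_neg (le_abs_self B)).trans (hB x hx t ht)
    | succ k ih => exact h.neg_expTerm_succ_le (abs_nonneg B) ih
  intro x hx t ht
  simpa using le_of_tendsto' (tendsto_expTerm |B| (1 + 2 * M) t).neg
    fun k => hbound k x hx t ht

theorem pos (h : IsNonlocalSupersolution S T M L p u ut) {x₀ : α} (hx₀ : x₀ ∈ S)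
    (hpos : 0 < u x₀ 0) : ∀ t ∈ Icc 0 T, 0 < u x₀ t := by
  intro t ht
  have hmono := le_exp_mul_mul_of_deriv_add_mul_nonneg (M := M) (h.continuousOn x₀ hx₀)
    (h.hasDerivAt x₀ hx₀) (fun s hs => ?_) ht
  · exact (pos_iff_pos_of_mul_pos (hpos.trans_le hmono)).1 (Real.exp_pos _)
  have hsI : s ∈ Icc 0 T := Ioo_subset_Icc_self hs
  have hLs : 0 ≤ L x₀ s := by
    simpa using h.neg_le_nonlocal s hs 0 le_rfl
      (fun y hy => by simpa using h.nonneg y hy s hsI) x₀ hx₀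
  have hpl := (abs_le.1 (h.abs_coeff_le x₀ hx₀ s hs)).1
  have := h.le_deriv x₀ hx₀ s hs
  nlinarith [mul_nonneg (neg_le_iff_add_nonneg.1 hpl) (h.nonneg x₀ hx₀ s hsI)]

end IsNonlocalSupersolution

theorem stmt_1_general {N : ℕ} (Ω : Set (Fin N → ℝ))
    (hΩopen : IsOpen Ω)
    (T : ℝ)
    -- the kernel J satisfies condition (J)
    (J : (Fin N → ℝ) → (Fin N → ℝ) → ℝ)
    (hJnn : ∀ x y, 0 ≤ J x y)
    (hJint : ∀ x, (∫ y, J x y) = 1)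
    -- p is bounded and measurable on Q̄_T
    (p : (Fin N → ℝ) → ℝ → ℝ)
    (hpbdd : ∃ M : ℝ, ∀ x ∈ closure Ω, ∀ t ∈ Icc (0:ℝ) T, |p x t| ≤ M)
    -- u ∈ Z¹ : bounded measurable, with u(x,·) ∈ C¹([0,T]) with derivative ut
    (u ut : (Fin N → ℝ) → ℝ → ℝ)
    (humeas : Measurable (Function.uncurry u))
    (hubdd : ∃ M : ℝ, ∀ x ∈ closure Ω, ∀ t ∈ Icc (0:ℝ) T, |u x t| ≤ M)
    (huderiv : ∀ x ∈ closure Ω, ∀ t ∈ Icc (0:ℝ) T,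
      HasDerivWithinAt (u x) (ut x t) (Icc (0:ℝ) T) t)
    (hinit : ∀ x ∈ closure Ω, 0 ≤ u x 0)
    (hineq : ∀ x ∈ closure Ω, ∀ t ∈ Ioc (0:ℝ) T,
      (∫ y in Ω, J x y * u y t) + p x t * u x t ≤ ut x t)
    (x₀ : Fin N → ℝ) (hx₀ : x₀ ∈ closure Ω) (hx₀pos : 0 < u x₀ 0) :
    ∀ t ∈ Icc (0:ℝ) T, 0 < u x₀ t := by
  obtain ⟨Mp, hMp⟩ := hpbdd
  obtain ⟨Mu, hMu⟩ := hubdd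
  have hJ : ∀ x, Integrable (J x) := fun x => .of_integral_ne_zero (by simp [hJint])
  have hΩ := hΩopen.measurableSet
  have hL : ∀ s ∈ Ioo 0 T, ∀ b, 0 ≤ b → (∀ y ∈ closure Ω, -b ≤ u y s) →
      ∀ x ∈ closure Ω, -b ≤ ∫ y in Ω, J x y * u y s := by
    intro s hs b hb hub x _
    have hint : IntegrableOn (fun y => J x y * u y s) Ω :=
      (hJ x).integrableOn.mul_bdd humeas.of_uncurry_right.aestronglyMeasurable
        (ae_restrict_of_forall_mem hΩ fun y hy =>
          hMu y (subset_closure hy) s (Ioo_subset_Icc_self hs))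
    exact neg_le_setIntegral_mul_of_neg_le hΩ hb (hJ x).integrableOn hint (fun y _ => hJnn x y)
      ((setIntegral_le_integral (hJ x) (ae_of_all _ (hJnn x))).trans_eq (hJint x))
      (fun y hy => hub y (subset_closure hy))
  exact IsNonlocalSupersolution.pos (T := T) (M := Mp)
    { neg_le_nonlocal := hL
      abs_coeff_le := fun x hx s hs => hMp x hx s (Ioo_subset_Icc_self hs)
      bddBelow := ⟨Mu, fun x hx s hs => neg_le_of_abs_le (hMu x hx s hs)⟩
      continuousOn := fun x hx => HasDerivWithinAt.continuousOn (huderiv x hx)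
      hasDerivAt := fun x hx s hs =>
        (huderiv x hx s (Ioo_subset_Icc_self hs)).hasDerivAt (Icc_mem_nhds hs.1 hs.2)
      nonneg_zero := hinit
      le_deriv := fun x hx s hs => hineq x hx s (Ioo_subset_Ioc_self hs) }
    hx₀ hx₀pos

/-- if moreover `u(x₀,0) > 0` for some `x₀ ∈ Ω̄`, then `u(x₀,t) > 0`
for all `t ∈ [0,T]`. -/
theorem stmt_1 {N : ℕ} (Ω : Set (Fin N → ℝ)) (hΩne : Ω.Nonempty)
    (hΩopen : IsOpen Ω) (hΩbdd : Bornology.IsBounded Ω)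
    (T : ℝ) (hT : 0 < T)
    -- the kernel J satisfies condition (J)
    (J : (Fin N → ℝ) → (Fin N → ℝ) → ℝ)
    (hJcont : Continuous (Function.uncurry J))
    (hJnn : ∀ x y, 0 ≤ J x y)
    (hJdiag : ∀ x, 0 < J x x)
    (hJint : ∀ x, (∫ y, J x y) = 1)
    -- p is bounded and measurable on Q̄_T
    (p : (Fin N → ℝ) → ℝ → ℝ)
    (hpmeas : Measurable (Function.uncurry p))
    (hpbdd : ∃ M : ℝ, ∀ x ∈ closure Ω, ∀ t ∈ Icc (0:ℝ) T, |p x t| ≤ M)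
    -- u ∈ Z¹ : bounded measurable, with u(x,·) ∈ C¹([0,T]) with derivative ut
    (u ut : (Fin N → ℝ) → ℝ → ℝ)
    (humeas : Measurable (Function.uncurry u))
    (hubdd : ∃ M : ℝ, ∀ x ∈ closure Ω, ∀ t ∈ Icc (0:ℝ) T, |u x t| ≤ M)
    (huderiv : ∀ x ∈ closure Ω, ∀ t ∈ Icc (0:ℝ) T,
      HasDerivWithinAt (u x) (ut x t) (Icc (0:ℝ) T) t)
    (hutcont : ∀ x ∈ closure Ω, ContinuousOn (ut x) (Icc (0:ℝ) T))
    (hinit : ∀ x ∈ closure Ω, 0 ≤ u x 0)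
    (hineq : ∀ x ∈ closure Ω, ∀ t ∈ Ioc (0:ℝ) T,
      (∫ y in Ω, J x y * u y t) + p x t * u x t ≤ ut x t)
    (x₀ : Fin N → ℝ) (hx₀ : x₀ ∈ closure Ω) (hx₀pos : 0 < u x₀ 0) :
    ∀ t ∈ Icc (0:ℝ) T, 0 < u x₀ t :=
  stmt_1_general Ω hΩopen T J hJnn hJint p hpbdd u ut humeas hubdd huderiv hinit hineq x₀ hx₀ hx₀pos
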